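/- Let G be a graph on the vertex set [n−1] with n ≥ 3, and let v be a vertex of G with N_G[v] = [n−1] (i.e., v is adjacent to every other vertex of G). Then N(P_{Ĝ}) = N(P_{(G−v)^}) + N(P_{(G/v)^}) + 2, where (·)^ denotes suspension. -/

import Mathlib

/-!
A nonempty face of `P_G` is the convex hull of the edge vectors `e_i - e_j` on which a potential
`l : V → ℝ` maximizes `l i - l j`, and every edge vector is a vertex, so faces are determined by
their sets of directed edges. For connected `G`, the facets correspond bijectively to the
potentials vanishing at a base vertex with `l i - l j ≤ 1` along edges whose tight edges
(`|l i - l j| = 1`) form a connected spanning subgraph: if the tight graph is disconnected, raising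
`l` off one of its components enlarges the face. For a suspension, normalized at the apex, these
are the labelings `g : V → {-1, 0, 1}` with `|g i - g j| ≤ 1` along edges in which every vertex
labelled `0` has a neighbour with a nonzero label.

If `v` is adjacent to all other vertices, the labelings with `g v = 0` are those of `G - v`, and
those with `g v = ±1` are all `{0, ±1}`-valued labelings of the remaining vertices. As `G/v` is
complete, its labelings are the nonzero `{0, 1}`- and `{0, -1}`-valued ones, which accounts for
the `+ 2`.
-/

open Finset

/-- The symmetric edge polytope of a finite simple graph `G`: the convex hull of the
vectors `e_i - e_j` for all adjacent pairs `i, j`. -/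
def symEdgePolytope {V : Type*} [DecidableEq V] (G : SimpleGraph V) : Set (V → ℝ) :=
  convexHull ℝ {x : V → ℝ | ∃ i j : V, G.Adj i j ∧
    x = fun k => (if k = i then (1 : ℝ) else 0) - (if k = j then (1 : ℝ) else 0)}

/-- A facet of a polytope `P`: a maximal proper (exposed) face of `P`. -/
def IsFacet {V : Type*} (P F : Set (V → ℝ)) : Prop :=
  IsExposed ℝ P F ∧ F ≠ P ∧
    ∀ F' : Set (V → ℝ), IsExposed ℝ P F' → F' ≠ P → F ⊆ F' → F' = F

/-- `N(P)`: the number of facets of a polytope `P`. -/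
noncomputable def numFacets {V : Type*} (P : Set (V → ℝ)) : ℕ :=
  Set.ncard {F : Set (V → ℝ) | IsFacet P F}

/-- The suspension `Ĝ` of a graph `G`: a new apex vertex (`none`) is joined to all
vertices of `G`. -/
def suspension {V : Type*} (G : SimpleGraph V) : SimpleGraph (Option V) where
  Adj x y :=
    match x, y with
    | some a, some b => G.Adj a b
    | some _, none => True
    | none, some _ => True
    | none, none => False
  symm := by
    constructor
    rintro (_ | a) (_ | b) h
    · exact h
    · trivial
    · trivial
    · exact h.symm
  loopless := by
    constructor
    rintro (_ | a) h
    · exact h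
    · exact G.irrefl h

/-- The graph `G/v` obtained from `G` by deleting the vertex `v` and inserting all edges
`{i, j}` with `i, j ∈ N_G(v)`, `i ≠ j`. -/
def contractVertex {V : Type*} (G : SimpleGraph V) (v : V) : SimpleGraph {u : V // u ≠ v} where
  Adj a b := a ≠ b ∧ ((G.Adj a b) ∨ (G.Adj v a ∧ G.Adj v b))
  symm := by
    constructor
    rintro a b ⟨hab, h⟩
    exact ⟨hab.symm, h.imp (fun h' => h'.symm) (fun h' => ⟨h'.2, h'.1⟩)⟩
  loopless := ⟨fun a h => h.1 rfl⟩

section ConvexHullFinite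

variable {E : Type*} [AddCommGroup E] [Module ℝ E] [TopologicalSpace E] [T2Space E]
  [IsTopologicalAddGroup E] [ContinuousSMul ℝ E] [LocallyConvexSpace ℝ E] {t F : Set E}

-- Krein–Milman: `F` is the closed convex hull of its extreme points, which are vertices in `t`.
theorem IsExposed.eq_convexHull_inter (ht : t.Finite) (hF : IsExposed ℝ (convexHull ℝ t) F) :
    F = convexHull ℝ (t ∩ F) := by
  have hFconv : Convex ℝ F := hF.convex (convex_convexHull ℝ t)
  refine subset_antisymm ?_ (convexHull_min Set.inter_subset_right hFconv)
  have hext : F.extremePoints ℝ ⊆ t ∩ F := fun x hx =>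
    ⟨extremePoints_convexHull_subset (hF.isExtreme.extremePoints_subset_extremePoints hx),
      hx.1⟩
  calc F = closure (convexHull ℝ (F.extremePoints ℝ)) :=
        (closure_convexHull_extremePoints (hF.isCompact (ht.isCompact_convexHull ℝ)) hFconv).symm
    _ ⊆ closure (convexHull ℝ (t ∩ F)) := closure_mono (convexHull_mono hext)
    _ = convexHull ℝ (t ∩ F) :=
      ((ht.subset Set.inter_subset_left).isClosed_convexHull ℝ).closure_eq

theorem mem_of_mem_convexHull_of_lt (ht : t.Finite) {x : E} (hx : x ∈ convexHull ℝ t)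
    (f : StrongDual ℝ E) (hf : ∀ y ∈ t, y ≠ x → f y < f x) : x ∈ t := by
  have hxF : x ∈ f.toExposed (convexHull ℝ t) := by
    refine ⟨hx, fun y hy =>
      convexHull_min (fun z hz => ?_) (convex_halfSpace_le f.isLinear _) hy⟩
    by_cases hzx : z = x
    · exact le_of_eq (congrArg f hzx)
    · exact (hf z hz hzx).le
  obtain ⟨y, hyt, hyF⟩ := convexHull_nonempty_iff.1
    ⟨x, (ContinuousLinearMap.toExposed.isExposed.eq_convexHull_inter ht) ▸ hxF⟩
  by_contra hxt
  exact (hf y hyt (fun h => hxt (h ▸ hyt))).not_ge (hyF.2 x hx)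

end ConvexHullFinite

section ExtendAt

variable {V : Type*} [DecidableEq V]

def extendAt (v : V) (s : ℝ) (g : {u // u ≠ v} → ℝ) : V → ℝ :=
  fun u => if h : u = v then s else g ⟨u, h⟩

@[simp] theorem extendAt_self (v : V) (s : ℝ) (g : {u // u ≠ v} → ℝ) :
    extendAt v s g v = s :=
  dif_pos rfl

theorem extendAt_of_ne {v u : V} {s : ℝ} {g : {u // u ≠ v} → ℝ} (h : u ≠ v) :
    extendAt v s g u = g ⟨u, h⟩ :=
  dif_neg h

theorem extendAt_injective (v : V) (s : ℝ) : Function.Injective (extendAt v s) := fun _ _ h =>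
  funext fun u => by simpa [extendAt_of_ne u.2] using congrFun h u

theorem ncard_inter_setOf_apply_eq (S : Set (V → ℝ)) (v : V) (s : ℝ) :
    (S ∩ {g | g v = s}).ncard = {g | extendAt v s g ∈ S}.ncard := by
  have himage : S ∩ {g | g v = s} = extendAt v s '' {g | extendAt v s g ∈ S} := by
    ext g
    constructor
    · rintro ⟨hg, hgv⟩
      have hext : extendAt v s (fun u => g u) = g := funext fun u => by
        by_cases hu : u = v
        · subst hu
          exact (extendAt_self _ _ _).trans hgv.symm
        · exact extendAt_of_ne hu
      exact ⟨fun u => g u, show extendAt v s _ ∈ S by rwa [hext], hext⟩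
    · rintro ⟨g, hg, rfl⟩
      exact ⟨hg, extendAt_self v s g⟩
  rw [himage, (extendAt_injective v s).injOn.ncard_image]

end ExtendAt

def binaryLabelings (α : Type*) (s : ℝ) : Set (α → ℝ) := {g | ∀ u, g u = 0 ∨ g u = s}

theorem finite_binaryLabelings (α : Type*) [Finite α] (s : ℝ) : (binaryLabelings α s).Finite :=
  (Set.Finite.pi' fun _ => Set.toFinite {0, s}).subset fun _ hg u => hg u

theorem zero_mem_binaryLabelings (α : Type*) (s : ℝ) : 0 ∈ binaryLabelings α s :=
  fun _ => .inl rfl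

namespace SimpleGraph

variable {W : Type*} {G : SimpleGraph W}

instance [Finite W] : Finite G.Dart := Finite.of_injective _ Dart.toProd_injective

section Potential

theorem Reachable.apply_eq_of_forall_adj {β : Type*} {f : W → β}
    (hf : ∀ ⦃a b⦄, G.Adj a b → f a = f b) {x y : W} (h : G.Reachable x y) : f x = f y := by
  obtain ⟨p⟩ := h
  induction p with
  | nil => rfl
  | cons hab _ ih => exact (hf hab).trans ih

variable (G) in
def maxDarts (l : W → ℝ) : Set G.Dart :=
  {d | ∀ d' : G.Dart, l d'.fst - l d'.snd ≤ l d.fst - l d.snd}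

variable (G) in
def IsLipschitzPotential (l : W → ℝ) : Prop := ∀ ⦃a b⦄, G.Adj a b → l a - l b ≤ 1

variable (G) in
def tightDarts (l : W → ℝ) : Set G.Dart := {d | l d.fst - l d.snd = 1}

variable (G) in
def tightGraph (l : W → ℝ) : SimpleGraph W := fromRel fun a b => G.Adj a b ∧ l a - l b = 1

variable (G) in
def IsFacetPotential (l : W → ℝ) : Prop :=
  G.IsLipschitzPotential l ∧ (G.tightGraph l).Connected

theorem tightGraph_adj {l : W → ℝ} {a b : W} :
    (G.tightGraph l).Adj a b ↔ G.Adj a b ∧ (l a - l b = 1 ∨ l b - l a = 1) := by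
  simp only [tightGraph, fromRel_adj]
  constructor
  · rintro ⟨-, ⟨hab, h⟩ | ⟨hba, h⟩⟩
    exacts [⟨hab, .inl h⟩, ⟨hba.symm, .inr h⟩]
  · rintro ⟨hab, h | h⟩
    exacts [⟨hab.ne, .inl ⟨hab, h⟩⟩, ⟨hab.ne, .inr ⟨hab.symm, h⟩⟩]

theorem mem_maxDarts_iff {l : W → ℝ} {d₀ d : G.Dart} (hd₀ : d₀ ∈ G.maxDarts l) :
    d ∈ G.maxDarts l ↔ l d.fst - l d.snd = l d₀.fst - l d₀.snd :=
  ⟨fun hd => (hd₀ d).antisymm (hd d₀), fun h d' => h ▸ hd₀ d'⟩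

-- The reversed dart has the opposite value, so a nonpositive maximum is attained everywhere.
theorem pos_of_mem_maxDarts {l : W → ℝ} {d : G.Dart} (hd : d ∈ G.maxDarts l)
    (hne : G.maxDarts l ≠ Set.univ) : 0 < l d.fst - l d.snd := by
  by_contra! hle
  refine hne (Set.eq_univ_of_forall fun d' d'' => ?_)
  have h₁ := hd d'
  have h₂ := hd d'.symm
  have h₃ := hd d''
  simp only [Dart.symm, Prod.fst_swap, Prod.snd_swap] at h₂
  linarith

theorem maxDarts_eq_tightDarts {l : W → ℝ} (hl : G.IsLipschitzPotential l)
    (hne : (G.tightDarts l).Nonempty) : G.maxDarts l = G.tightDarts l := by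
  obtain ⟨d₀, hd₀⟩ := hne
  ext d
  rw [mem_maxDarts_iff (d₀ := d₀) fun d' => hd₀.symm ▸ hl d'.adj, hd₀]
  rfl

theorem tightDarts_ne_univ {l : W → ℝ} (hne : (G.tightDarts l).Nonempty) :
    G.tightDarts l ≠ Set.univ := by
  obtain ⟨d, hd⟩ := hne
  intro h
  have : l d.snd - l d.fst = 1 := (h ▸ Set.mem_univ d.symm : d.symm ∈ G.tightDarts l)
  simp only [tightDarts, Set.mem_ofPred_eq] at hd
  linarith

theorem exists_tightDarts_eq_maxDarts {l : W → ℝ}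
    (hne : (G.maxDarts l).Nonempty) (hne' : G.maxDarts l ≠ Set.univ) :
    ∃ l', G.IsLipschitzPotential l' ∧ G.tightDarts l' = G.maxDarts l := by
  obtain ⟨d₀, hd₀⟩ := hne
  have hM := pos_of_mem_maxDarts hd₀ hne'
  refine ⟨fun x => l x / (l d₀.fst - l d₀.snd), fun a b hab => ?_, ?_⟩
  · rw [← sub_div, div_le_one hM]
    exact hd₀ ⟨(a, b), hab⟩
  · ext d
    rw [mem_maxDarts_iff hd₀]
    simp only [tightDarts, Set.mem_ofPred_eq, ← sub_div, div_eq_one_iff_eq hM.ne']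

theorem sub_eq_mul_of_forall_tightDarts {l l' : W → ℝ} {c : ℝ}
    (hT : (G.tightGraph l).Preconnected)
    (hc : ∀ d ∈ G.tightDarts l, l' d.fst - l' d.snd = c) (x y : W) :
    l' x - l' y = c * (l x - l y) := by
  have key := (hT x y).apply_eq_of_forall_adj (f := fun z => l' z - c * l z) fun a b hab => by
    obtain ⟨hab, h | h⟩ := tightGraph_adj.1 hab
    · have := hc ⟨(a, b), hab⟩ h
      linear_combination this - c * h
    · have := hc ⟨(b, a), hab.symm⟩ h
      linear_combination -this + c * h
  linear_combination key

theorem IsFacetPotential.tightDarts_nonempty [Nontrivial W] {l : W → ℝ}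
    (hl : G.IsFacetPotential l) : (G.tightDarts l).Nonempty := by
  obtain ⟨a⟩ := hl.2.nonempty
  obtain ⟨b, hab⟩ := hl.2.preconnected.exists_adj_of_nontrivial a
  obtain ⟨hab, h | h⟩ := tightGraph_adj.1 hab
  exacts [⟨⟨(a, b), hab⟩, h⟩, ⟨⟨(b, a), hab.symm⟩, h⟩]

-- The maximal darts of `l'` span the tight graph of `l`, so `l'` is a positive multiple of `l`
-- up to a constant.
theorem IsFacetPotential.maxDarts_eq_of_tightDarts_subset [Nontrivial W] {l l' : W → ℝ}
    (hl : G.IsFacetPotential l) (hsub : G.tightDarts l ⊆ G.maxDarts l')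
    (hne : G.maxDarts l' ≠ Set.univ) : G.maxDarts l' = G.tightDarts l := by
  obtain ⟨d₀, hd₀⟩ := hl.tightDarts_nonempty
  have hd₀' := hsub hd₀
  have key := sub_eq_mul_of_forall_tightDarts hl.2.preconnected
    fun d hd => (mem_maxDarts_iff hd₀').1 (hsub hd)
  have hpos := pos_of_mem_maxDarts hd₀' hne
  have hd₀1 : l d₀.fst - l d₀.snd = 1 := hd₀
  generalize l' d₀.fst - l' d₀.snd = c at key hpos
  ext d
  rw [mem_maxDarts_iff hd₀', key d.fst, key d₀.fst, hd₀1, mul_one, mul_eq_left₀ hpos.ne']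
  rfl

-- Raise `l` by the largest admissible constant off the tight component of `x`: this keeps `l`
-- Lipschitz and all its tight darts, and makes one crossing dart tight.
theorem exists_tightDarts_ssubset [Finite W] (hG : G.Preconnected) {l : W → ℝ}
    (hl : G.IsLipschitzPotential l) (hT : ¬ (G.tightGraph l).Preconnected) :
    ∃ l', G.IsLipschitzPotential l' ∧ G.tightDarts l ⊂ G.tightDarts l' := by
  classical
  obtain ⟨x, y, hxy⟩ : ∃ x y, ¬ (G.tightGraph l).Reachable x y := by
    simpa [Preconnected] using hT
  set A := {z | (G.tightGraph l).Reachable x z}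
  have hA : ∀ ⦃a b⦄, (G.tightGraph l).Adj a b → (a ∈ A ↔ b ∈ A) := fun _ _ h =>
    ⟨fun ha => ha.trans h.reachable, fun hb => hb.trans h.symm.reachable⟩
  set C := {d : G.Dart | d.fst ∈ A ∧ d.snd ∉ A}
  have hC : ∀ d ∈ C, l d.snd - l d.fst < 1 := fun d hd =>
    (hl d.symm.adj).lt_of_ne fun h => hd.2 ((hA (tightGraph_adj.2 ⟨d.adj, .inr h⟩)).1 hd.1)
  obtain ⟨d₀, -, hd₀C⟩ := (hG x y).some.exists_boundary_dart A (Reachable.refl x) hxy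
  obtain ⟨d, hdC, hmax⟩ := C.exists_max_image (fun d => l d.snd - l d.fst) C.toFinite
    ⟨d₀, hd₀C⟩
  set t := 1 - (l d.snd - l d.fst)
  have ht : 0 < t := sub_pos.2 (hC d hdC)
  set l' := fun z => l z + if z ∈ A then 0 else t
  have hl' : G.IsLipschitzPotential l' := fun a b hab => by
    have hcross : a ∉ A → b ∈ A → l a - l b ≤ l d.snd - l d.fst := fun ha hb =>
      hmax ⟨(b, a), hab.symm⟩ ⟨hb, ha⟩
    have := hl hab
    simp only [l']
    split_ifs with ha hb hb <;> first | linarith | linarith [hcross ha hb]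
  have hsub : G.tightDarts l ⊆ G.tightDarts l' := fun e he => by
    have hside := hA (tightGraph_adj.2 ⟨e.adj, .inl he⟩)
    simp only [tightDarts, Set.mem_ofPred_eq, l'] at he ⊢
    split_ifs <;> first | linarith | tauto
  refine ⟨l', hl', (Set.ssubset_iff_of_subset hsub).2 ⟨d.symm, ?_, fun h => ?_⟩⟩
  · simp only [tightDarts, Set.mem_ofPred_eq, Dart.symm, Prod.fst_swap, Prod.snd_swap, l',
      if_pos hdC.1, if_neg hdC.2, t]
    ring
  · have : l d.snd - l d.fst = 1 := h
    linarith [hC d hdC]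

theorem tightDarts_sub_const (l : W → ℝ) (c : ℝ) :
    G.tightDarts (fun x => l x - c) = G.tightDarts l := by
  simp [tightDarts]

theorem IsFacetPotential.sub_const {l : W → ℝ} (hl : G.IsFacetPotential l) (c : ℝ) :
    G.IsFacetPotential fun x => l x - c := by
  have h : G.tightGraph (fun x => l x - c) = G.tightGraph l := by simp [tightGraph]
  exact ⟨fun a b hab => by simpa using hl.1 hab, h ▸ hl.2⟩

theorem IsFacetPotential.eq_of_tightDarts_eq {l₁ l₂ : W → ℝ}
    (hl₁ : G.IsFacetPotential l₁) (h : G.tightDarts l₁ = G.tightDarts l₂) {w₀ : W}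
    (hw₀ : l₁ w₀ = l₂ w₀) : l₁ = l₂ := by
  have key := sub_eq_mul_of_forall_tightDarts (l' := l₂) (c := 1) hl₁.2.preconnected
    fun d hd => (h ▸ hd : d ∈ G.tightDarts l₂)
  funext x
  linarith [key x w₀]

theorem IsFacetPotential.exists_int_sub {l : W → ℝ}
    (hl : G.IsFacetPotential l) (x y : W) : ∃ z : ℤ, l x - l y = z := by
  refine Int.fract_eq_fract.1 ((hl.2.preconnected x y).apply_eq_of_forall_adj
    (f := fun z => Int.fract (l z)) fun a b hab => ?_)
  obtain ⟨-, h | h⟩ := tightGraph_adj.1 hab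
  · exact Int.fract_eq_fract.2 ⟨1, by simpa using h⟩
  · exact Int.fract_eq_fract.2 ⟨-1, by push_cast; linarith⟩

end Potential

section EdgeVector

variable [DecidableEq W]

def Dart.edgeVec (d : G.Dart) : W → ℝ := Pi.single d.fst 1 - Pi.single d.snd 1

variable (G) in
def dartHull (S : Set G.Dart) : Set (W → ℝ) := convexHull ℝ (Dart.edgeVec '' S)

theorem symEdgePolytope_eq_dartHull_univ : symEdgePolytope G = G.dartHull Set.univ := by
  rw [symEdgePolytope, dartHull, Set.image_univ]
  congr 1
  ext x
  constructor
  · rintro ⟨i, j, hij, rfl⟩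
    exact ⟨⟨(i, j), hij⟩, by ext k; simp [Dart.edgeVec, Pi.single_apply]⟩
  · rintro ⟨d, rfl⟩
    exact ⟨d.fst, d.snd, d.adj, by ext k; simp [Dart.edgeVec, Pi.single_apply]⟩

theorem Dart.edgeVec_apply_sub_le (d d' : G.Dart) :
    d'.edgeVec d.fst - d'.edgeVec d.snd ≤ 2 := by
  simp only [Dart.edgeVec, Pi.sub_apply, Pi.single_apply]
  split_ifs <;> norm_num

theorem Dart.eq_of_edgeVec_apply_sub_eq {d d' : G.Dart}
    (h : d'.edgeVec d.fst - d'.edgeVec d.snd = 2) : d' = d := by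
  have := d.fst_ne_snd
  have := d'.fst_ne_snd
  simp only [Dart.edgeVec, Pi.sub_apply, Pi.single_apply] at h
  split_ifs at h <;> norm_num at h
  simp_all [Dart.ext_iff, Prod.ext_iff, eq_comm]

theorem Dart.edgeVec_apply_fst_sub_snd (d : G.Dart) : d.edgeVec d.fst - d.edgeVec d.snd = 2 := by
  simp [Dart.edgeVec, d.fst_ne_snd, d.snd_ne_fst]
  norm_num

theorem Dart.edgeVec_injective : Function.Injective (Dart.edgeVec (G := G)) := fun _ d h =>
  Dart.eq_of_edgeVec_apply_sub_eq (h ▸ d.edgeVec_apply_fst_sub_snd)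

theorem Dart.map_edgeVec (f : StrongDual ℝ (W → ℝ)) (d : G.Dart) :
    f d.edgeVec = f (Pi.single d.fst 1) - f (Pi.single d.snd 1) :=
  map_sub f _ _

variable [Fintype W]

theorem Dart.edgeVec_mem_dartHull_iff {d : G.Dart} {S : Set G.Dart} :
    d.edgeVec ∈ G.dartHull S ↔ d ∈ S := by
  refine ⟨fun h => ?_, fun h => subset_convexHull ℝ _ ⟨d, h, rfl⟩⟩
  let f : StrongDual ℝ (W → ℝ) :=
    ContinuousLinearMap.proj (R := ℝ) (φ := fun _ : W => ℝ) d.fst -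
      ContinuousLinearMap.proj (R := ℝ) (φ := fun _ : W => ℝ) d.snd
  obtain ⟨d', hd', hdd'⟩ := mem_of_mem_convexHull_of_lt (Set.toFinite _) h f (by
    rintro _ ⟨d', -, rfl⟩ hne
    change d'.edgeVec d.fst - d'.edgeVec d.snd < d.edgeVec d.fst - d.edgeVec d.snd
    rw [d.edgeVec_apply_fst_sub_snd]
    exact (d.edgeVec_apply_sub_le d').lt_of_ne fun heq =>
      hne (congrArg _ (Dart.eq_of_edgeVec_apply_sub_eq heq)))
  exact Dart.edgeVec_injective hdd' ▸ hd'

theorem dartHull_subset_dartHull_iff {S T : Set G.Dart} :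
    G.dartHull S ⊆ G.dartHull T ↔ S ⊆ T :=
  ⟨fun h _ hd => Dart.edgeVec_mem_dartHull_iff.1 (h (Dart.edgeVec_mem_dartHull_iff.2 hd)),
    fun h => convexHull_mono (Set.image_mono h)⟩

theorem dartHull_injective : Function.Injective G.dartHull := fun _ _ h =>
  (dartHull_subset_dartHull_iff.1 h.le).antisymm (dartHull_subset_dartHull_iff.1 h.ge)

theorem toExposed_symEdgePolytope (f : StrongDual ℝ (W → ℝ)) :
    f.toExposed (symEdgePolytope G) = G.dartHull (G.maxDarts fun k => f (Pi.single k 1)) := by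
  rw [symEdgePolytope_eq_dartHull_univ, dartHull, dartHull,
    ContinuousLinearMap.toExposed.isExposed.eq_convexHull_inter (Set.toFinite _)]
  congr 1
  ext x
  simp only [Set.mem_inter_iff, Set.image_univ, Set.mem_range, ContinuousLinearMap.toExposed,
    Set.mem_ofPred_eq, Set.mem_image, maxDarts, ← Dart.map_edgeVec]
  constructor
  · rintro ⟨⟨d, rfl⟩, -, hmax⟩
    exact ⟨d, fun d' => hmax _ (subset_convexHull ℝ _ ⟨d', rfl⟩), rfl⟩
  · rintro ⟨d, hd, rfl⟩
    refine ⟨⟨d, rfl⟩, subset_convexHull ℝ _ ⟨d, rfl⟩, fun y hy => ?_⟩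
    refine convexHull_min ?_ (convex_halfSpace_le f.isLinear _) hy
    rintro _ ⟨d', rfl⟩
    exact hd d'

theorem isExposed_dartHull_maxDarts (l : W → ℝ) :
    IsExposed ℝ (symEdgePolytope G) (G.dartHull (G.maxDarts l)) := by
  let f : StrongDual ℝ (W → ℝ) :=
    ∑ k, l k • ContinuousLinearMap.proj (R := ℝ) (φ := fun _ : W => ℝ) k
  have hf : (fun k => f (Pi.single k 1)) = l := by
    ext k
    simp [f, Pi.single_apply]
  rw [← hf, ← toExposed_symEdgePolytope]
  exact ContinuousLinearMap.toExposed.isExposed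

theorem isExposed_symEdgePolytope_iff {F : Set (W → ℝ)} :
    IsExposed ℝ (symEdgePolytope G) F ↔ F = ∅ ∨ ∃ l, F = G.dartHull (G.maxDarts l) := by
  refine ⟨fun h => ?_, ?_⟩
  · rcases F.eq_empty_or_nonempty with hF | hF
    · exact .inl hF
    obtain ⟨f, rfl⟩ := h hF
    exact .inr ⟨_, toExposed_symEdgePolytope f⟩
  · rintro (rfl | ⟨l, rfl⟩)
    exacts [isExposed_empty, isExposed_dartHull_maxDarts l]

theorem isExposed_dartHull_tightDarts {l : W → ℝ} (hl : G.IsLipschitzPotential l)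
    (hne : (G.tightDarts l).Nonempty) :
    IsExposed ℝ (symEdgePolytope G) (G.dartHull (G.tightDarts l)) :=
  maxDarts_eq_tightDarts hl hne ▸ isExposed_dartHull_maxDarts l

theorem dartHull_tightDarts_ne {l : W → ℝ} (hne : (G.tightDarts l).Nonempty) :
    G.dartHull (G.tightDarts l) ≠ symEdgePolytope G := by
  rw [symEdgePolytope_eq_dartHull_univ]
  exact dartHull_injective.ne (tightDarts_ne_univ hne)

variable [Nontrivial W]

theorem IsFacetPotential.isFacet {l : W → ℝ} (hl : G.IsFacetPotential l) :
    IsFacet (symEdgePolytope G) (G.dartHull (G.tightDarts l)) := by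
  have hne := hl.tightDarts_nonempty
  refine ⟨isExposed_dartHull_tightDarts hl.1 hne, dartHull_tightDarts_ne hne,
    fun F hF hFP hsub => ?_⟩
  rcases isExposed_symEdgePolytope_iff.1 hF with rfl | ⟨l', rfl⟩
  · obtain ⟨d, hd⟩ := hne
    exact (hsub (Dart.edgeVec_mem_dartHull_iff.2 hd)).elim
  · rw [symEdgePolytope_eq_dartHull_univ] at hFP
    rw [hl.maxDarts_eq_of_tightDarts_subset (dartHull_subset_dartHull_iff.1 hsub)
      fun h => hFP (h ▸ rfl)]

theorem exists_isFacetPotential_of_isFacet (hG : G.Preconnected) {F : Set (W → ℝ)}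
    (hF : IsFacet (symEdgePolytope G) F) :
    ∃ l, G.IsFacetPotential l ∧ F = G.dartHull (G.tightDarts l) := by
  obtain ⟨hexp, hFP, hmax⟩ := hF
  have hproper : ∀ l, G.IsLipschitzPotential l → (G.tightDarts l).Nonempty →
      F ⊆ G.dartHull (G.tightDarts l) → G.dartHull (G.tightDarts l) = F := fun l hl hne =>
    hmax _ (isExposed_dartHull_tightDarts hl hne) (dartHull_tightDarts_ne hne)
  -- Lifting the zero potential produces a nonempty proper face, so `F` is not empty.
  have hF : F.Nonempty := by
    rw [Set.nonempty_iff_ne_empty]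
    rintro rfl
    have hT : ¬ (G.tightGraph 0).Preconnected := fun h => by
      obtain ⟨b, hab⟩ := h.exists_adj_of_nontrivial (Classical.arbitrary W)
      simp [tightGraph_adj] at hab
    obtain ⟨l, hl, hss⟩ := exists_tightDarts_ssubset hG (fun _ _ _ => by simp) hT
    obtain ⟨d, hd, -⟩ := Set.exists_of_ssubset hss
    have := hproper l hl ⟨d, hd⟩ (Set.empty_subset _)
    exact Set.notMem_empty _ (this ▸ Dart.edgeVec_mem_dartHull_iff.2 hd)
  obtain ⟨l, rfl⟩ := (isExposed_symEdgePolytope_iff.1 hexp).resolve_left hF.ne_empty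
  have hne : (G.maxDarts l).Nonempty := Set.image_nonempty.1 (convexHull_nonempty_iff.1 hF)
  have hne' : G.maxDarts l ≠ Set.univ := fun h =>
    hFP (by rw [h, symEdgePolytope_eq_dartHull_univ])
  obtain ⟨l', hl', heq⟩ := exists_tightDarts_eq_maxDarts hne hne'
  rw [← heq] at hproper hne ⊢
  refine ⟨l', ⟨hl', ⟨?_⟩⟩, rfl⟩
  by_contra hT
  obtain ⟨l'', hl'', hss⟩ := exists_tightDarts_ssubset hG hl' hT
  exact hss.ne (dartHull_injective (hproper l'' hl'' (hne.mono hss.subset)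
    (dartHull_subset_dartHull_iff.2 hss.subset))).symm

theorem numFacets_symEdgePolytope (hG : G.Preconnected) (w₀ : W) :
    numFacets (symEdgePolytope G) = {l | G.IsFacetPotential l ∧ l w₀ = 0}.ncard := by
  have hfacets : {F | IsFacet (symEdgePolytope G) F} =
      (fun l => G.dartHull (G.tightDarts l)) '' {l | G.IsFacetPotential l ∧ l w₀ = 0} := by
    ext F
    constructor
    · intro hF
      obtain ⟨l, hl, rfl⟩ := exists_isFacetPotential_of_isFacet hG hF
      exact ⟨fun x => l x - l w₀, ⟨hl.sub_const _, sub_self _⟩,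
        by simp only [tightDarts_sub_const]⟩
    · rintro ⟨l, ⟨hl, -⟩, rfl⟩
      exact hl.isFacet
  rw [numFacets, hfacets, Set.InjOn.ncard_image]
  rintro l₁ ⟨hl₁, h₁⟩ l₂ ⟨-, h₂⟩ h
  exact hl₁.eq_of_tightDarts_eq (dartHull_injective h) (h₁.trans h₂.symm)

end EdgeVector

section Suspension

variable {V : Type*} {H : SimpleGraph V}

@[simp] theorem suspension_adj_some_some {a b : V} :
    (suspension H).Adj (some a) (some b) ↔ H.Adj a b := Iff.rfl

@[simp] theorem suspension_adj_none_some (u : V) : (suspension H).Adj none (some u) := trivial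

@[simp] theorem suspension_adj_some_none (u : V) : (suspension H).Adj (some u) none := trivial

@[simp] theorem not_suspension_adj_none_none : ¬ (suspension H).Adj none none := id

variable (H) in
theorem suspension_preconnected : (suspension H).Preconnected := by
  have hnone : ∀ x, (suspension H).Reachable none x := by
    rintro (_ | u)
    exacts [.refl _, (suspension_adj_none_some u).reachable]
  exact fun x y => (hnone x).symm.trans (hnone y)

variable (H) in
def facetLabelings : Set (V → ℝ) :=
  {g | (∀ u, g u = -1 ∨ g u = 0 ∨ g u = 1) ∧ (∀ ⦃a b⦄, H.Adj a b → |g a - g b| ≤ 1) ∧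
    ∀ u, g u = 0 → ∃ w, H.Adj u w ∧ g w ≠ 0}

theorem mem_facetLabelings_of_isFacetPotential {g : V → ℝ}
    (hl : (suspension H).IsFacetPotential (Option.elim' 0 g)) : g ∈ H.facetLabelings := by
  have hle : ∀ u, g u ≤ 1 ∧ -g u ≤ 1 := fun u => by
    simpa using And.intro (hl.1 (suspension_adj_some_none (H := H) u))
      (hl.1 (suspension_adj_none_some (H := H) u))
  refine ⟨fun u => ?_, fun a b hab => ?_, fun u hu => ?_⟩
  · obtain ⟨z, hz⟩ := hl.exists_int_sub (some u) none
    simp only [Option.elim'_some, Option.elim'_none, sub_zero] at hz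
    have h₁ : (z : ℝ) ≤ 1 := hz ▸ (hle u).1
    have h₂ : (-1 : ℝ) ≤ z := by linarith [hz ▸ (hle u).2]
    have h₁ : z ≤ 1 := by exact_mod_cast h₁
    have h₂ : -1 ≤ z := by exact_mod_cast h₂
    interval_cases z <;> simp [hz]
  · exact abs_sub_le_iff.2
      ⟨hl.1 (suspension_adj_some_some.2 hab), hl.1 (suspension_adj_some_some.2 hab.symm)⟩
  · have : Nonempty V := ⟨u⟩
    obtain ⟨_ | w, hw⟩ := hl.2.preconnected.exists_adj_of_nontrivial (some u)
    · simp [tightGraph_adj, hu] at hw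
    · obtain ⟨huw, h⟩ := tightGraph_adj.1 hw
      refine ⟨w, huw, fun hw0 => ?_⟩
      simp [hu, hw0] at h

theorem isFacetPotential_of_mem_facetLabelings {g : V → ℝ} (hg : g ∈ H.facetLabelings) :
    (suspension H).IsFacetPotential (Option.elim' 0 g) := by
  obtain ⟨hval, hadj, hzero⟩ := hg
  have hlip : (suspension H).IsLipschitzPotential (Option.elim' 0 g) := by
    rintro (_ | a) (_ | b) hab
    · exact absurd hab not_suspension_adj_none_none
    · rcases hval b with h | h | h <;> simp [h]
    · rcases hval a with h | h | h <;> simp [h]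
    · exact (abs_sub_le_iff.1 (hadj hab)).1
  have hapex : ∀ u, g u ≠ 0 →
      ((suspension H).tightGraph (Option.elim' 0 g)).Adj none (some u) :=
    fun u hu => by rcases hval u with h | h | h <;> simp_all [tightGraph_adj]
  refine ⟨hlip, (connected_iff_exists_forall_reachable _).2 ⟨none, ?_⟩⟩
  rintro (_ | u)
  · rfl
  by_cases hu : g u = 0
  · obtain ⟨w, huw, hw⟩ := hzero u hu
    refine (hapex w hw).reachable.trans (Adj.reachable ?_)
    rcases hval w with h | h | h <;> simp_all [tightGraph_adj, huw.symm]
  · exact (hapex u hu).reachable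

theorem numFacets_symEdgePolytope_suspension [Fintype V] [DecidableEq V] [Nonempty V]
    (H : SimpleGraph V) : numFacets (symEdgePolytope (suspension H)) = H.facetLabelings.ncard := by
  have hpot : {l | (suspension H).IsFacetPotential l ∧ l none = 0} =
      Option.elim' 0 '' H.facetLabelings := by
    ext l
    constructor
    · rintro ⟨hl, hl0⟩
      have hl' : Option.elim' 0 (l ∘ some) = l := funext fun x => by cases x <;> simp [hl0]
      exact ⟨l ∘ some, mem_facetLabelings_of_isFacetPotential (hl' ▸ hl), hl'⟩
    · rintro ⟨g, hg, rfl⟩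
      exact ⟨isFacetPotential_of_mem_facetLabelings hg, rfl⟩
  rw [numFacets_symEdgePolytope (suspension_preconnected H) none, hpot, Set.InjOn.ncard_image]
  exact fun g₁ _ g₂ _ h => funext fun u => congrFun h (some u)

end Suspension

section Labeling

variable {V : Type*} {H : SimpleGraph V}

theorem finite_facetLabelings [Finite V] : H.facetLabelings.Finite :=
  (Set.Finite.pi' fun _ => Set.toFinite {-1, 0, 1}).subset fun _ hg u => hg.1 u

theorem mem_facetLabelings_of_mem_binaryLabelings {g : V → ℝ} {s : ℝ} (hs : s = 1 ∨ s = -1)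
    (hg : g ∈ binaryLabelings V s) (hzero : ∀ u, g u = 0 → ∃ w, H.Adj u w ∧ g w ≠ 0) :
    g ∈ H.facetLabelings := by
  refine ⟨fun u => ?_, fun a b _ => ?_, hzero⟩
  · rcases hg u with h | h <;> rcases hs with rfl | rfl <;> simp [h]
  · rcases hg a with ha | ha <;> rcases hg b with hb | hb <;> rcases hs with rfl | rfl <;>
      norm_num [ha, hb]

theorem exists_ne_zero_of_mem_facetLabelings [Nonempty V] {g : V → ℝ}
    (hg : g ∈ H.facetLabelings) : ∃ w, g w ≠ 0 := by
  by_cases h : g (Classical.arbitrary V) = 0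
  · obtain ⟨w, -, hw⟩ := hg.2.2 _ h
    exact ⟨w, hw⟩
  · exact ⟨_, h⟩

theorem facetLabelings_eq_of_pairwise_adj [Nonempty V] (hH : Pairwise H.Adj) :
    H.facetLabelings = (binaryLabelings V 1 \ {0}) ∪ (binaryLabelings V (-1) \ {0}) := by
  ext g
  constructor
  · intro hg
    have hne : g ≠ 0 := fun h => by
      obtain ⟨w, hw⟩ := exists_ne_zero_of_mem_facetLabelings hg
      exact hw (by simp [h])
    obtain ⟨hval, hadj, -⟩ := hg
    by_cases hneg : ∃ a, g a = -1
    · obtain ⟨a, ha⟩ := hneg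
      refine .inr ⟨fun u => ?_, hne⟩
      rcases hval u with h | h | h
      · exact .inr h
      · exact .inl h
      · have hau : a ≠ u := fun hau => by rw [hau, h] at ha; norm_num at ha
        have := hadj (hH hau)
        rw [ha, h] at this
        norm_num at this
    · simp only [not_exists] at hneg
      exact .inl ⟨fun u => (hval u).resolve_left (hneg u), hne⟩
  · rintro (⟨hg, hne⟩ | ⟨hg, hne⟩) <;>
    · refine mem_facetLabelings_of_mem_binaryLabelings (by norm_num) hg fun u hu => ?_
      obtain ⟨w, hw⟩ := Function.ne_iff.1 hne
      exact ⟨w, hH fun h => hw (h ▸ hu), hw⟩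

theorem ncard_facetLabelings_add_two_of_pairwise_adj [Finite V] [Nonempty V]
    (hH : Pairwise H.Adj) :
    H.facetLabelings.ncard + 2 = (binaryLabelings V 1).ncard + (binaryLabelings V (-1)).ncard := by
  have hdisj : Disjoint (binaryLabelings V 1 \ {0}) (binaryLabelings V (-1) \ {0}) := by
    refine Set.disjoint_left.2 fun g ⟨h₁, hne⟩ ⟨h₂, _⟩ => hne (funext fun u => ?_)
    rcases h₁ u with h | h
    · exact h
    rcases h₂ u with h' | h'
    · exact h'
    linarith
  rw [facetLabelings_eq_of_pairwise_adj hH, Set.ncard_union_eq hdisj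
    ((finite_binaryLabelings V 1).sdiff) ((finite_binaryLabelings V (-1)).sdiff),
    ← Set.ncard_sdiff_singleton_add_one (zero_mem_binaryLabelings V 1)
      (finite_binaryLabelings V 1),
    ← Set.ncard_sdiff_singleton_add_one (zero_mem_binaryLabelings V (-1))
      (finite_binaryLabelings V (-1))]
  ring

theorem ncard_facetLabelings_eq_add [Finite V] (v : V) :
    H.facetLabelings.ncard = (H.facetLabelings ∩ {g | g v = 0}).ncard +
      (H.facetLabelings ∩ {g | g v = 1}).ncard + (H.facetLabelings ∩ {g | g v = -1}).ncard := by
  have h₁ := Set.ncard_inter_add_ncard_sdiff_eq_ncard H.facetLabelings {g | g v = 0}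
    finite_facetLabelings
  have h₂ := Set.ncard_inter_add_ncard_sdiff_eq_ncard (H.facetLabelings \ {g | g v = 0})
    {g | g v = 1} finite_facetLabelings.sdiff
  have e₁ : (H.facetLabelings \ {g | g v = 0}) ∩ {g | g v = 1} =
      H.facetLabelings ∩ {g | g v = 1} := by
    ext g
    simp only [Set.mem_inter_iff, Set.mem_sdiff, Set.mem_ofPred_eq]
    exact ⟨fun h => ⟨h.1.1, h.2⟩, fun h => ⟨⟨h.1, by simp [h.2]⟩, h.2⟩⟩
  have e₂ : (H.facetLabelings \ {g | g v = 0}) \ {g | g v = 1} =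
      H.facetLabelings ∩ {g | g v = -1} := by
    ext g
    simp only [Set.mem_inter_iff, Set.mem_sdiff, Set.mem_ofPred_eq]
    constructor
    · rintro ⟨⟨hg, h₀⟩, h₁⟩
      exact ⟨hg, ((hg.1 v).resolve_right fun h => h.elim h₀ h₁)⟩
    · rintro ⟨hg, h⟩
      exact ⟨⟨hg, by simp [h]⟩, by simp [h]; norm_num⟩
  rw [e₁] at h₂
  rw [e₂] at h₂
  omega

section UniversalVertex

variable [DecidableEq V] {v : V}

theorem extendAt_mem_facetLabelings_iff (hv : ∀ u, u = v ∨ H.Adj v u) {s : ℝ}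
    (hs : s = 1 ∨ s = -1) {g : {u // u ≠ v} → ℝ} :
    extendAt v s g ∈ H.facetLabelings ↔ g ∈ binaryLabelings _ s := by
  have hvs : extendAt v s g v ≠ 0 := by rcases hs with rfl | rfl <;> simp
  constructor
  · rintro ⟨hval, hadj, -⟩ u
    have hu := hval u
    have hvu := hadj ((hv u).resolve_left u.2)
    simp only [extendAt_self, extendAt_of_ne u.2, Subtype.coe_eta] at hu hvu
    rcases hu with h | h | h <;> rcases hs with rfl | rfl <;>
      first | exact .inl h | exact .inr h | (rw [h] at hvu; norm_num at hvu)
  · intro hg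
    refine mem_facetLabelings_of_mem_binaryLabelings hs (fun u => ?_) fun u hu => ?_
    · obtain rfl | hu := eq_or_ne u v
      · simp
      · simpa [extendAt_of_ne hu] using hg ⟨u, hu⟩
    · have huv : u ≠ v := fun h => hvs (h ▸ hu)
      exact ⟨v, ((hv u).resolve_left huv).symm, hvs⟩

theorem extendAt_zero_mem_facetLabelings_iff (hv : ∀ u, u = v ∨ H.Adj v u)
    [Nonempty {u // u ≠ v}] {g : {u // u ≠ v} → ℝ} :
    extendAt v 0 g ∈ H.facetLabelings ↔ g ∈ (H.induce {u | u ≠ v}).facetLabelings := by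
  constructor
  · rintro ⟨hval, hadj, hzero⟩
    refine ⟨fun u => by simpa [extendAt_of_ne u.2] using hval u,
      fun a b hab => by simpa [extendAt_of_ne a.2, extendAt_of_ne b.2] using hadj hab,
      fun u hu => ?_⟩
    obtain ⟨w, huw, hw⟩ := hzero u (by simpa [extendAt_of_ne u.2] using hu)
    have hwv : w ≠ v := by rintro rfl; simp at hw
    exact ⟨⟨w, hwv⟩, huw, by simpa [extendAt_of_ne hwv] using hw⟩
  · intro hg
    have : Nonempty ↥{u | u ≠ v} := ‹Nonempty {u // u ≠ v}›
    obtain ⟨w₀, hw₀⟩ := exists_ne_zero_of_mem_facetLabelings hg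
    obtain ⟨hval, hadj, hzero⟩ := hg
    have hval' : ∀ u,
        extendAt v 0 g u = -1 ∨ extendAt v 0 g u = 0 ∨ extendAt v 0 g u = 1 := by
      intro u
      obtain rfl | hu := eq_or_ne u v
      · simp
      · simpa [extendAt_of_ne hu] using hval ⟨u, hu⟩
    refine ⟨hval', fun a b hab => ?_, fun u hu => ?_⟩
    · obtain rfl | ha := eq_or_ne a v
      · rcases hval' b with h | h | h <;> simp [h]
      obtain rfl | hb := eq_or_ne b v
      · rcases hval' a with h | h | h <;> simp [h]
      simpa [extendAt_of_ne ha, extendAt_of_ne hb] using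
        hadj (a := ⟨a, ha⟩) (b := ⟨b, hb⟩) hab
    · obtain rfl | hu' := eq_or_ne u v
      · refine ⟨w₀, (hv w₀).resolve_left w₀.2, ?_⟩
        simpa [extendAt_of_ne w₀.2] using hw₀
      · obtain ⟨w, huw, hw⟩ := hzero ⟨u, hu'⟩ (by simpa [extendAt_of_ne hu'] using hu)
        exact ⟨w, huw, by simpa [extendAt_of_ne w.2] using hw⟩

theorem ncard_facetLabelings_of_forall_adj [Finite V] (hv : ∀ u, u = v ∨ H.Adj v u)
    [Nonempty {u // u ≠ v}] :
    H.facetLabelings.ncard = (H.induce {u | u ≠ v}).facetLabelings.ncard +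
      (contractVertex H v).facetLabelings.ncard + 2 := by
  have hK : Pairwise (contractVertex H v).Adj := fun a b hab =>
    ⟨hab, .inr ⟨(hv a).resolve_left a.2, (hv b).resolve_left b.2⟩⟩
  have h₀ : (H.facetLabelings ∩ {g | g v = 0}).ncard =
      (H.induce {u | u ≠ v}).facetLabelings.ncard := by
    rw [ncard_inter_setOf_apply_eq]
    exact congrArg Set.ncard (Set.ext fun g => extendAt_zero_mem_facetLabelings_iff hv)
  have hs : ∀ s, s = 1 ∨ s = -1 →
      (H.facetLabelings ∩ {g | g v = s}).ncard = (binaryLabelings {u // u ≠ v} s).ncard :=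
    fun s hs => by
      rw [ncard_inter_setOf_apply_eq]
      exact congrArg Set.ncard (Set.ext fun g => extendAt_mem_facetLabelings_iff hv hs)
  have := ncard_facetLabelings_add_two_of_pairwise_adj hK
  rw [ncard_facetLabelings_eq_add v, h₀, hs 1 (.inl rfl), hs (-1) (.inr rfl)]
  omega

end UniversalVertex

end Labeling

end SimpleGraph

/-- Let `G` be a graph on `[n-1]` with `n ≥ 3` and let `v` be a vertex
of `G` adjacent to every other vertex (`N_G[v] = [n-1]`). Then
`N(P_Ĝ) = N(P_{(G-v)^}) + N(P_{(G/v)^}) + 2`. -/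
theorem numFacets_suspension_eq {V : Type*} [Fintype V] [DecidableEq V]
    (G : SimpleGraph V) (hn : 3 ≤ Fintype.card V + 1) (v : V)
    (hNv : ∀ u : V, u = v ∨ G.Adj v u) :
    numFacets (symEdgePolytope (suspension G)) =
      numFacets (symEdgePolytope (suspension (G.induce {u : V | u ≠ v}))) +
        numFacets (symEdgePolytope (suspension (contractVertex G v))) + 2 := by
  obtain ⟨w, hw⟩ := Fintype.exists_ne_of_one_lt_card (by omega) v
  have : Nonempty V := ⟨v⟩
  have : Nonempty {u // u ≠ v} := ⟨⟨w, hw⟩⟩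
  have : Nonempty ↥{u : V | u ≠ v} := ⟨⟨w, hw⟩⟩
  simp only [SimpleGraph.numFacets_symEdgePolytope_suspension]
  exact SimpleGraph.ncard_facetLabelings_of_forall_adj hNv
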